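/- Let ρ_{AB} be a quantum state and M an operator with M†M ≤ Id satisfying Tr(M† M ρ_{AB}) (equivalently Tr(M ρ_{AB} M†)) taking some positive value p. Let ρ̂_{AB} = (M ρ_{AB} M†)/p, where M acts only on system B. Then D_max(ρ̂_A ‖ ρ_A) ≤ log(1/p). -/

import Mathlib

open Matrix Kronecker
open scoped Classical ComplexOrder

noncomputable section

abbrev Str (k : ℕ) := Fin k → Bool

def IsDensity {A : Type*} [Fintype A] (ρ : Matrix A A ℂ) : Prop :=
  ρ.PosSemidef ∧ ρ.trace = 1

def IsPure {A : Type*} (ρ : Matrix A A ℂ) : Prop :=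
  ∃ v : A → ℂ, ρ = Matrix.vecMulVec v (star v)

def posSemidefSqrt {A : Type*} [Fintype A] [DecidableEq A] {M : Matrix A A ℂ}
    (hM : M.PosSemidef) : Matrix A A ℂ :=
  hM.1.eigenvectorUnitary.1 * Matrix.diagonal (((↑) : ℝ → ℂ) ∘ (Real.sqrt ·) ∘ hM.1.eigenvalues) *
    (star hM.1.eigenvectorUnitary : Matrix A A ℂ)

def traceNorm {A : Type*} [Fintype A] [DecidableEq A] (M : Matrix A A ℂ) : ℝ :=
  (posSemidefSqrt (Matrix.posSemidef_conjTranspose_mul_self M)).trace.re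

def msqrt {A : Type*} [Fintype A] [DecidableEq A] (M : Matrix A A ℂ) : Matrix A A ℂ :=
  if h : M.PosSemidef then posSemidefSqrt h else 0

def fidelity {A : Type*} [Fintype A] [DecidableEq A] (ρ σ : Matrix A A ℂ) : ℝ :=
  traceNorm (msqrt ρ * msqrt σ)

def Bures {A : Type*} [Fintype A] [DecidableEq A] (ρ σ : Matrix A A ℂ) : ℝ :=
  Real.sqrt (1 - fidelity ρ σ)

def mUniform (A : Type*) [Fintype A] [DecidableEq A] : Matrix A A ℂ :=
  ((Fintype.card A : ℂ))⁻¹ • (1 : Matrix A A ℂ)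

def dmaxLE {A : Type*} [Fintype A] (ρ σ : Matrix A A ℂ) (c : ℝ) : Prop :=
  (((2:ℝ) ^ c) • σ - ρ).PosSemidef

def Dmax {A : Type*} [Fintype A] (ρ σ : Matrix A A ℂ) : ℝ :=
  sInf {c : ℝ | dmaxLE ρ σ c}

def ptraceRight {A B : Type*} [Fintype A] [Fintype B]
    (ρ : Matrix (A × B) (A × B) ℂ) : Matrix A A ℂ :=
  Matrix.of fun a a' => ∑ b, ρ (a, b) (a', b)

def ptraceLeft {A B : Type*} [Fintype A] [Fintype B]
    (ρ : Matrix (A × B) (A × B) ℂ) : Matrix B B ℂ :=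
  Matrix.of fun b b' => ∑ a, ρ (a, b) (a, b')

def condHmin {A B : Type*} [Fintype A] [Fintype B] [DecidableEq A] [DecidableEq B]
    (ρ : Matrix (A × B) (A × B) ℂ) : ℝ :=
  sSup {x : ℝ | ∃ σ : Matrix B B ℂ, IsDensity σ ∧ x = - Dmax ρ ((1 : Matrix A A ℂ) ⊗ₖ σ)}

def condHminTilde {A B : Type*} [Fintype A] [Fintype B] [DecidableEq A] [DecidableEq B]
    (ρ : Matrix (A × B) (A × B) ℂ) : ℝ :=
  - Dmax ρ ((1 : Matrix A A ℂ) ⊗ₖ ptraceLeft ρ)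

/-
The partial trace over `B` is cyclic for operators acting on `B` alone, so the `A`-marginal of
`(1 ⊗ M) ρ (1 ⊗ Mᴴ)` only depends on `Mᴴ M`. Writing `1 - Mᴴ M = Sᴴ S`, the difference
`ρ_A - p ρ̂_A` is therefore the `A`-marginal of the positive operator `(1 ⊗ S) ρ (1 ⊗ Sᴴ)`,
which gives `p ρ̂_A ≤ ρ_A`.
-/

section PartialTrace

variable {A B : Type*} [Fintype A] [Fintype B]

lemma ptraceRight_add (ρ σ : Matrix (A × B) (A × B) ℂ) :
    ptraceRight (ρ + σ) = ptraceRight ρ + ptraceRight σ := by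
  ext a a'
  simp [ptraceRight, Finset.sum_add_distrib]

lemma ptraceRight_smul (r : ℝ) (ρ : Matrix (A × B) (A × B) ℂ) :
    ptraceRight (r • ρ) = r • ptraceRight ρ := by
  ext a a'
  simp [ptraceRight, Finset.smul_sum]

lemma ptraceRight_eq_sum_submatrix (ρ : Matrix (A × B) (A × B) ℂ) :
    ptraceRight ρ = ∑ b, ρ.submatrix (·, b) (·, b) := by
  ext a a'
  simp [ptraceRight, Matrix.sum_apply]

lemma posSemidef_ptraceRight {ρ : Matrix (A × B) (A × B) ℂ} (hρ : ρ.PosSemidef) :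
    (ptraceRight ρ).PosSemidef := by
  rw [ptraceRight_eq_sum_submatrix]
  exact posSemidef_sum _ fun b _ => hρ.submatrix _

variable [DecidableEq A]

lemma ptraceRight_one_kronecker_mul_comm (X : Matrix B B ℂ) (ρ : Matrix (A × B) (A × B) ℂ) :
    ptraceRight ((1 ⊗ₖ X) * ρ) = ptraceRight (ρ * (1 ⊗ₖ X)) := by
  ext a a'
  simp only [ptraceRight, of_apply, mul_apply, Fintype.sum_prod_type, kroneckerMap_apply,
    one_apply, ite_mul, one_mul, zero_mul, mul_ite, mul_zero]
  simp_rw [Finset.sum_comm (γ := A), Finset.sum_ite_eq, Finset.sum_ite_eq', Finset.mem_univ,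
    if_true, mul_comm (X _ _)]
  exact Finset.sum_comm

lemma ptraceRight_conj_one_kronecker (N : Matrix B B ℂ) (ρ : Matrix (A × B) (A × B) ℂ) :
    ptraceRight ((1 ⊗ₖ N) * ρ * (1 ⊗ₖ Nᴴ))
      = ptraceRight (ρ * ((1 : Matrix A A ℂ) ⊗ₖ (Nᴴ * N))) := by
  rw [Matrix.mul_assoc, ptraceRight_one_kronecker_mul_comm, Matrix.mul_assoc,
    ← mul_kronecker_mul, Matrix.one_mul]

lemma ptraceRight_add_conj_one_kronecker [DecidableEq B] (ρ : Matrix (A × B) (A × B) ℂ)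
    {M S : Matrix B B ℂ} (hMS : Mᴴ * M + Sᴴ * S = 1) :
    ptraceRight ((1 ⊗ₖ M) * ρ * (1 ⊗ₖ Mᴴ)) + ptraceRight ((1 ⊗ₖ S) * ρ * (1 ⊗ₖ Sᴴ))
      = ptraceRight ρ := by
  rw [ptraceRight_conj_one_kronecker, ptraceRight_conj_one_kronecker, ← ptraceRight_add,
    ← Matrix.mul_add, ← kronecker_add, hMS, one_kronecker_one, Matrix.mul_one]

open scoped MatrixOrder in
lemma posSemidef_ptraceRight_sub_conj_one_kronecker [DecidableEq B]
    {ρ : Matrix (A × B) (A × B) ℂ} (hρ : ρ.PosSemidef)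
    {M : Matrix B B ℂ} (hM : ((1 : Matrix B B ℂ) - Mᴴ * M).PosSemidef) :
    (ptraceRight ρ - ptraceRight ((1 ⊗ₖ M) * ρ * ((1 : Matrix A A ℂ) ⊗ₖ Mᴴ))).PosSemidef := by
  obtain ⟨S, hS⟩ := CStarAlgebra.nonneg_iff_eq_star_mul_self.mp hM.nonneg
  have hMS : Mᴴ * M + star S * S = 1 := (sub_eq_iff_eq_add'.mp hS).symm
  have hSρS := posSemidef_ptraceRight (hρ.mul_mul_conjTranspose_same ((1 : Matrix A A ℂ) ⊗ₖ S))
  rw [conjTranspose_kronecker, conjTranspose_one] at hSρS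
  rwa [← ptraceRight_add_conj_one_kronecker ρ hMS, add_sub_cancel_left]

end PartialTrace

theorem dmax_after_measurement_general {A B : Type*} [Fintype A] [Fintype B]
    [DecidableEq A] [DecidableEq B]
    (ρ : Matrix (A × B) (A × B) ℂ) (hρ : IsDensity ρ)
    (M : Matrix B B ℂ) (hM : ((1 : Matrix B B ℂ) - Mᴴ * M).PosSemidef)
    (p : ℝ) (hp : 0 < p) :
    dmaxLE
      (ptraceRight (p⁻¹ • (((1 : Matrix A A ℂ) ⊗ₖ M) * ρ * ((1 : Matrix A A ℂ) ⊗ₖ Mᴴ))))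
      (ptraceRight ρ) (Real.logb 2 (1 / p)) := by
  have h2pow : (2 : ℝ) ^ Real.logb 2 (1 / p) = p⁻¹ := by
    rw [Real.rpow_logb (by norm_num) (by norm_num) (by positivity), one_div]
  rw [dmaxLE, h2pow, ptraceRight_smul, ← smul_sub]
  exact (posSemidef_ptraceRight_sub_conj_one_kronecker hρ.1 hM).smul (inv_nonneg.mpr hp.le)

/-- For a measurement operator `M` acting only on system `B` with success
probability `p`, the conditioned marginal on `A` satisfies `D_max(ρ̂_A ‖ ρ_A) ≤ log(1/p)`. -/
theorem dmax_after_measurement {A B : Type*} [Fintype A] [Fintype B]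
    [DecidableEq A] [DecidableEq B]
    (ρ : Matrix (A × B) (A × B) ℂ) (hρ : IsDensity ρ)
    (M : Matrix B B ℂ) (hM : ((1 : Matrix B B ℂ) - Mᴴ * M).PosSemidef)
    (p : ℝ) (hp : 0 < p)
    (hptr : (((1 : Matrix A A ℂ) ⊗ₖ M) * ρ * ((1 : Matrix A A ℂ) ⊗ₖ Mᴴ)).trace = (p : ℂ)) :
    dmaxLE
      (ptraceRight (p⁻¹ • (((1 : Matrix A A ℂ) ⊗ₖ M) * ρ * ((1 : Matrix A A ℂ) ⊗ₖ Mᴴ))))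
      (ptraceRight ρ) (Real.logb 2 (1 / p)) :=
  dmax_after_measurement_general ρ hρ M hM p hp
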